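/- Knight's identity: for any real numbers a and b and any τ ∈ (0,1), ρ_τ(a−b) − ρ_τ(a) = b·(𝟙{a ≤ 0} − τ) + ∫₀^b (𝟙{a ≤ s} − 𝟙{a ≤ 0}) ds, where ρ_τ(u) = u(τ − 𝟙{u < 0}). -/

import Mathlib

noncomputable def rho (τ u : ℝ) : ℝ := u * (τ - if u < 0 then 1 else 0)

/-! Since `ρ_τ u = τ u - min u 0` and `s ↦ max s a` is a right antiderivative of `𝟙{a ≤ s}`,
both sides reduce to `max b a - max 0 a - τ b`. -/

open Set

lemma rho_eq_mul_sub_min (τ u : ℝ) : rho τ u = τ * u - min u 0 := by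
  unfold rho
  split_ifs with hu
  · rw [min_eq_left hu.le]; ring
  · rw [min_eq_right (not_lt.mp hu)]; ring

lemma hasDerivWithinAt_max_const_Ioi (a x : ℝ) :
    HasDerivWithinAt (fun y => max y a) (if a ≤ x then 1 else 0) (Ioi x) x := by
  split_ifs with hx
  · exact (hasDerivWithinAt_id x _).congr (fun y hy => max_eq_left (hx.trans (le_of_lt hy)))
      (max_eq_left hx)
  · rw [not_le] at hx
    refine (hasDerivWithinAt_const x _ a).congr_of_eventuallyEq ?_ (max_eq_right hx.le)
    filter_upwards [nhdsWithin_le_nhds (Iio_mem_nhds hx)] with y hy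
    exact max_eq_right (le_of_lt hy)

lemma monotone_ite_le (a : ℝ) : Monotone (fun s : ℝ => if a ≤ s then (1 : ℝ) else 0) := by
  intro x y hxy
  by_cases hx : a ≤ x
  · simp [hx, hx.trans hxy]
  · by_cases hy : a ≤ y <;> simp [hx, hy]

lemma integral_ite_le (a c b : ℝ) :
    ∫ s in c..b, (if a ≤ s then (1 : ℝ) else 0) = max b a - max c a :=
  intervalIntegral.integral_eq_sub_of_hasDeriv_right
    (continuous_id.max continuous_const).continuousOn
    (fun x _ => hasDerivWithinAt_max_const_Ioi a x) ((monotone_ite_le a).intervalIntegrable)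

theorem knight_identity_general (τ : ℝ) (a b : ℝ) :
    rho τ (a - b) - rho τ a
      = b * ((if a ≤ 0 then (1:ℝ) else 0) - τ)
        + ∫ s in (0:ℝ)..b, ((if a ≤ s then (1:ℝ) else 0) - (if a ≤ 0 then (1:ℝ) else 0)) := by
  rw [intervalIntegral.integral_sub (monotone_ite_le a).intervalIntegrable intervalIntegrable_const,
    integral_ite_le, intervalIntegral.integral_const, smul_eq_mul, rho_eq_mul_sub_min,
    rho_eq_mul_sub_min]
  have hmax_b : max b a = a - min (a - b) 0 := by grind
  have hmax_0 : max 0 a = a - min a 0 := by grind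
  rw [hmax_b, hmax_0]
  ring

theorem knight_identity (τ : ℝ) (hτ : τ ∈ Set.Ioo (0:ℝ) 1) (a b : ℝ) :
    rho τ (a - b) - rho τ a
      = b * ((if a ≤ 0 then (1:ℝ) else 0) - τ)
        + ∫ s in (0:ℝ)..b, ((if a ≤ s then (1:ℝ) else 0) - (if a ≤ 0 then (1:ℝ) else 0)) :=
  knight_identity_general τ a b
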